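/- Let f be a finite Blaschke product with f(0) = 0 which is not a rotation. Then there exists a constant 1 < C < ∞, depending only on f, such that for every positive integer N and every arc I ⊆ ∂𝔻 with m(f^N(I)) < 1, one has |(f^N)'(ξ)| ≤ C |(f^N)'(ξ*)| for all ξ, ξ* ∈ I. -/

import Mathlib

open MeasureTheory Filter
open scoped Classical ENNReal Topology

noncomputable section

/-- The unit circle `∂𝔻 ⊆ ℂ`. -/
def uc : Set ℂ := {z : ℂ | ‖z‖ = 1}

/-- Parametrization of the unit circle by normalised arclength. -/
def pc (t : ℝ) : ℂ := Complex.exp (2 * Real.pi * Complex.I * t)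

/-- Normalised arclength measure on the unit circle, as a measure on `ℂ`. -/
def μc : Measure ℂ := Measure.map pc (volume.restrict (Set.Ico (0:ℝ) 1))

/-- Normalised length of a subset of the circle. -/
def mA (S : Set ℂ) : ℝ := (μc S).toReal

/-- Closed arc centered at `ξ` (a point of the circle) with normalised length `ℓ`
(the whole circle if `ℓ ≥ 1`). -/
def carc (ξ : ℂ) (ℓ : ℝ) : Set ℂ :=
  if 1 ≤ ℓ then uc
  else pc '' Set.Icc (Complex.arg ξ / (2 * Real.pi) - ℓ / 2)
                     (Complex.arg ξ / (2 * Real.pi) + ℓ / 2)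

/-- A (nondegenerate or degenerate) closed arc of the circle. -/
def IsClosedArc (I : Set ℂ) : Prop := ∃ ξ ∈ uc, ∃ ℓ : ℝ, 0 ≤ ℓ ∧ I = carc ξ ℓ

/-- The arc `I(z)`: centered at `z/|z|` with normalised length `1 - |z|`. -/
def Iarc (z : ℂ) : Set ℂ := if z = 0 then uc else carc (z / ‖z‖) (1 - ‖z‖)

/-- The arc `dI(z)`: concentric to `I(z)`, of length `min (d(1-|z|)) 1`. -/
def dIarc (d : ℕ) (z : ℂ) : Set ℂ := if z = 0 then uc else carc (z / ‖z‖) (d * (1 - ‖z‖))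

/-- Finite Blaschke product fixing the origin. -/
def IsFBP (f : ℂ → ℂ) : Prop :=
  ∃ (α : ℂ) (m J : ℕ) (zs : Fin J → ℂ),
    ‖α‖ = 1 ∧ 1 ≤ m ∧ (∀ j, ‖zs j‖ < 1) ∧
    ∀ w : ℂ, f w = α * w ^ m * ∏ j, (w - zs j) / (1 - (starRingEnd ℂ) (zs j) * w)

/-- Finite Blaschke product fixing the origin which is not a rotation (degree ≥ 2). -/
def IsFBPN (f : ℂ → ℂ) : Prop :=
  ∃ (α : ℂ) (m J : ℕ) (zs : Fin J → ℂ),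
    ‖α‖ = 1 ∧ 1 ≤ m ∧ 2 ≤ m + J ∧ (∀ j, ‖zs j‖ < 1) ∧
    ∀ w : ℂ, f w = α * w ^ m * ∏ j, (w - zs j) / (1 - (starRingEnd ℂ) (zs j) * w)

/-- Measure function: vanishing at `0`, strictly increasing, right-continuous. -/
def IsMeasureFunction (φ : ℝ → ℝ) : Prop :=
  φ 0 = 0 ∧ StrictMonoOn φ (Set.Ici 0) ∧
    ∀ t ∈ Set.Ici (0:ℝ), ContinuousWithinAt φ (Set.Ici t) t

/-- `φ`-Hausdorff measure on the circle, via countable covers by arcs. -/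
def Hmeas (φ : ℝ → ℝ) (E : Set ℂ) : ℝ≥0∞ :=
  ⨆ (δ : ℝ) (_ : 0 < δ),
    ⨅ (ξ : ℕ → ℂ) (ℓ : ℕ → ℝ) (_ : ∀ n, 0 ≤ ℓ n ∧ ℓ n < δ)
      (_ : E ⊆ ⋃ n, carc (ξ n) (ℓ n)),
      ∑' n, ENNReal.ofReal (φ (ℓ n))

/-- `min {|f'(ξ)| : ξ ∈ ∂𝔻}`. -/
def C0min (f : ℂ → ℂ) : ℝ := sInf ((fun ξ => ‖deriv f ξ‖) '' uc)

/-- Generalised inverse of `ψ(t) = φ(t)/t`: `ψ⁻¹(t) = inf {s > 0 : ψ(s) > t}`. -/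
def psiInv (φ : ℝ → ℝ) (t : ℝ) : ℝ := sInf {s : ℝ | 0 < s ∧ t < φ s / s}

/-- The set `A(w)` of boundary points where `∑ aₙ fⁿ` converges to `w`. -/
def Aset (f : ℂ → ℂ) (a : ℕ → ℂ) (w : ℂ) : Set ℂ :=
  {ξ : ℂ | ξ ∈ uc ∧
    Tendsto (fun L => ∑ n ∈ Finset.Icc 1 L, a n * (f^[n] ξ)) atTop (𝓝 w)}


-- pc basics
lemma pc_hasDerivAt (t : ℝ) :
    HasDerivAt pc (2 * Real.pi * Complex.I * pc t) t := by
  have h : HasDerivAt (fun w : ℂ => Complex.exp (2 * Real.pi * Complex.I * w))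
      (2 * Real.pi * Complex.I * Complex.exp (2 * Real.pi * Complex.I * (t:ℂ))) (t:ℂ) := by
    have h0 := (Complex.hasDerivAt_exp (2 * Real.pi * Complex.I * (t:ℂ))).comp (t:ℂ)
      ((hasDerivAt_id (t:ℂ)).const_mul (2 * Real.pi * Complex.I))
    have : (fun w : ℂ => Complex.exp (2 * Real.pi * Complex.I * w))
        = Complex.exp ∘ (fun w : ℂ => 2 * Real.pi * Complex.I * w) := rfl
    rw [this]
    exact h0.congr_deriv (by ring)
  exact h.comp_ofReal

lemma pc_norm (t : ℝ) : ‖pc t‖ = 1 := by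
  simp [pc, Complex.norm_exp]

lemma pc_mem_uc (t : ℝ) : pc t ∈ uc := pc_norm t

lemma pc_continuous : Continuous pc :=
  Complex.continuous_exp.comp (continuous_const.mul Complex.continuous_ofReal)

lemma pc_add_int (t : ℝ) (n : ℤ) : pc (t + n) = pc t := by
  simp only [pc, Complex.ofReal_add, Complex.ofReal_intCast, mul_add, Complex.exp_add]
  rw [show 2 * (Real.pi:ℂ) * Complex.I * (n:ℂ) = (n:ℂ) * (2 * Real.pi * Complex.I) by ring,
    Complex.exp_int_mul_two_pi_mul_I, mul_one]

lemma pc_arg (w : ℂ) (hw : w ∈ uc) : pc (Complex.arg w / (2 * Real.pi)) = w := by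
  have hπ : (2 * Real.pi : ℝ) ≠ 0 := by positivity
  have hπc : (Real.pi : ℂ) ≠ 0 := by exact_mod_cast Real.pi_ne_zero
  have : (2 * Real.pi * Complex.I * ((Complex.arg w / (2 * Real.pi) : ℝ) : ℂ))
      = (Complex.arg w : ℂ) * Complex.I := by
    push_cast
    field_simp
  rw [pc, this]
  have := Complex.norm_mul_exp_arg_mul_I w
  rw [show ‖w‖ = 1 from hw] at this
  simpa using this

lemma pc_image_Icc_subset (a b : ℝ) : pc '' Set.Icc a b ⊆ uc := by
  rintro - ⟨t, -, rfl⟩; exact pc_mem_uc t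

lemma uc_subset_pc_image (u : ℝ) : uc ⊆ pc '' Set.Icc u (u + 1) := by
  intro w hw
  set t := Complex.arg w / (2 * Real.pi) with ht
  refine ⟨t + ⌈u - t⌉, ⟨?_, ?_⟩, by rw [pc_add_int, pc_arg w hw]⟩
  · have := Int.le_ceil (u - t); linarith
  · have := Int.ceil_le_floor_add_one (u - t)
    have h2 := Int.floor_le (u - t)
    have : (⌈u - t⌉ : ℝ) ≤ (u - t) + 1 := by
      have := Int.ceil_lt_add_one (u - t); linarith
    linarith

lemma uc_eq_pc_image (u : ℝ) : uc = pc '' Set.Icc u (u + 1) := by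
  refine le_antisymm (uc_subset_pc_image u) (pc_image_Icc_subset u (u+1))

lemma uc_measurable : MeasurableSet uc := by
  have : uc = (fun z : ℂ => ‖z‖) ⁻¹' {1} := rfl
  rw [this]; exact (measurable_norm) (measurableSet_singleton 1)

lemma mA_uc : mA uc = 1 := by
  have h : μc uc = 1 := by
    rw [μc, Measure.map_apply pc_continuous.measurable uc_measurable]
    have : pc ⁻¹' uc = Set.univ := by
      ext t; simp [pc_mem_uc t, Set.mem_preimage]
    rw [this]
    simp
  rw [mA, h, ENNReal.toReal_one]

section BP
variable {J : ℕ} (zs : Fin J → ℂ)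

/-- Denominator of a Blaschke factor. -/
def bpden (j : Fin J) (z : ℂ) : ℂ := 1 - (starRingEnd ℂ) (zs j) * z

/-- The boundary derivative modulus. -/
def bpP (m : ℕ) (z : ℂ) : ℝ :=
  m + ∑ j, (1 - Complex.normSq (zs j)) / Complex.normSq (bpden zs j z)

/-- The Blaschke product itself. -/
def bpB (α : ℂ) (m : ℕ) (w : ℂ) : ℂ :=
  α * w ^ m * ∏ j, (w - zs j) / (1 - (starRingEnd ℂ) (zs j) * w)

lemma bpden_ne (hzs : ∀ j, ‖zs j‖ < 1) (j : Fin J) {z : ℂ} (hz : ‖z‖ ≤ 1) : bpden zs j z ≠ 0 := by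
  intro h
  have h1 : (starRingEnd ℂ) (zs j) * z = 1 := by
    have := sub_eq_zero.mp h; exact this.symm
  have : ‖(starRingEnd ℂ) (zs j) * z‖ < 1 := by
    rw [norm_mul, RCLike.norm_conj]
    calc ‖zs j‖ * ‖z‖ ≤ ‖zs j‖ * 1 := by
          exact mul_le_mul_of_nonneg_left hz (norm_nonneg _)
      _ < 1 := by simpa using hzs j
  rw [h1] at this; simp at this

lemma conj_mul_self {z : ℂ} (hz : ‖z‖ = 1) : (starRingEnd ℂ) z * z = 1 := by
  rw [mul_comm, Complex.mul_conj]
  have : Complex.normSq z = 1 := by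
    rw [← Complex.sq_norm, hz]; norm_num
  rw [this]; norm_num

lemma conj_z_mul_sub {z : ℂ} (hz : ‖z‖ = 1) (j : Fin J) :
    (starRingEnd ℂ) z * (z - zs j) = (starRingEnd ℂ) (bpden zs j z) := by
  rw [bpden]
  simp only [map_sub, map_one, map_mul, Complex.conj_conj]
  rw [mul_sub, conj_mul_self hz]
  ring

lemma sub_eq_z_mul_conj_den {z : ℂ} (hz : ‖z‖ = 1) (j : Fin J) :
    z - zs j = z * (starRingEnd ℂ) (bpden zs j z) := by
  rw [← conj_z_mul_sub zs hz j, ← mul_assoc, mul_comm z, conj_mul_self hz, one_mul]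

lemma norm_factor (hzs : ∀ j, ‖zs j‖ < 1) {z : ℂ} (hz : ‖z‖ = 1) (j : Fin J) :
    ‖(z - zs j) / bpden zs j z‖ = 1 := by
  have h1 : ‖z - zs j‖ = ‖bpden zs j z‖ := by
    rw [sub_eq_z_mul_conj_den zs hz j, norm_mul, hz, one_mul, RCLike.norm_conj]
  rw [norm_div, h1, div_self]
  intro h
  have := bpden_ne zs hzs j (le_of_eq hz)
  exact this (by rwa [norm_eq_zero] at h)

lemma bpB_norm (hzs : ∀ j, ‖zs j‖ < 1) (α : ℂ) (hα : ‖α‖ = 1) (m : ℕ) {z : ℂ} (hz : ‖z‖ = 1) :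
    ‖bpB zs α m z‖ = 1 := by
  rw [bpB, norm_mul, norm_mul, norm_prod, hα, norm_pow, hz]
  simp only [one_pow, one_mul]
  have h : ∀ j : Fin J, ‖(z - zs j) / (1 - (starRingEnd ℂ) (zs j) * z)‖ = 1 :=
    fun j => norm_factor zs hzs hz j
  rw [Finset.prod_congr rfl fun j _ => h j]
  simp

lemma bp_fact_deriv (hzs : ∀ j, ‖zs j‖ < 1) {z : ℂ} (hz : ‖z‖ = 1) (j : Fin J) :
    HasDerivAt (fun w => (w - zs j) / (1 - (starRingEnd ℂ) (zs j) * w))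
      ((1 - (Complex.normSq (zs j) : ℂ)) / (bpden zs j z) ^ 2) z := by
  have hden := bpden_ne zs hzs j (le_of_eq hz)
  have h1 : HasDerivAt (fun w : ℂ => w - zs j) 1 z := (hasDerivAt_id z).sub_const (zs j)
  have h2 : HasDerivAt (fun w : ℂ => 1 - (starRingEnd ℂ) (zs j) * w)
      (-((starRingEnd ℂ) (zs j))) z := by
    simpa using ((hasDerivAt_id z).const_mul ((starRingEnd ℂ) (zs j))).const_sub 1
  have h3 := h1.div h2 (by rwa [bpden] at hden)
  refine h3.congr_deriv ?_
  have hns : (starRingEnd ℂ) (zs j) * zs j = (Complex.normSq (zs j) : ℂ) := by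
    rw [mul_comm, Complex.mul_conj]
  have hnum : (1 : ℂ) - (Complex.normSq (zs j) : ℂ)
      = 1 * (1 - (starRingEnd ℂ) (zs j) * z) - (z - zs j) * -((starRingEnd ℂ) (zs j)) := by
    linear_combination hns
  rw [bpden, ← hnum]

lemma bp_fact_log (hzs : ∀ j, ‖zs j‖ < 1) {z : ℂ} (hz : ‖z‖ = 1) (j : Fin J) :
    (1 - (Complex.normSq (zs j) : ℂ)) / (bpden zs j z) ^ 2
      = (((1 - Complex.normSq (zs j)) / Complex.normSq (bpden zs j z) : ℝ) : ℂ)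
        * (starRingEnd ℂ) z * ((z - zs j) / bpden zs j z) := by
  have hden := bpden_ne zs hzs j (le_of_eq hz)
  have hdenc : (starRingEnd ℂ) (bpden zs j z) ≠ 0 := by
    simpa using hden
  have hns : ((Complex.normSq (bpden zs j z) : ℝ) : ℂ)
      = bpden zs j z * (starRingEnd ℂ) (bpden zs j z) := (Complex.mul_conj _).symm
  have hkey := conj_z_mul_sub zs hz j
  push_cast
  rw [hns, mul_assoc, (mul_div_assoc ((starRingEnd ℂ) z) (z - zs j) (bpden zs j z)).symm,
    hkey, div_mul_div_comm,
    div_eq_div_iff (pow_ne_zero 2 hden) (mul_ne_zero (mul_ne_zero hden hdenc) hden)]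
  ring

lemma bpB_hasDerivAt (hzs : ∀ j, ‖zs j‖ < 1) (α : ℂ) (m : ℕ) (hm : 1 ≤ m) {z : ℂ} (hz : ‖z‖ = 1) :
    HasDerivAt (bpB zs α m)
      ((bpP zs m z : ℂ) * (starRingEnd ℂ) z * bpB zs α m z) z := by
  have hz0 : z ≠ 0 := by intro h; rw [h] at hz; simp at hz
  have hzz := conj_mul_self hz
  set g : Fin J → ℂ → ℂ := fun j w => (w - zs j) / (1 - (starRingEnd ℂ) (zs j) * w) with hg
  set d : Fin J → ℂ := fun j => (1 - (Complex.normSq (zs j) : ℂ)) / (bpden zs j z) ^ 2 with hd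
  have hprod : HasDerivAt (fun w => ∏ j, g j w)
      (∑ j, (∏ i ∈ Finset.univ.erase j, g i z) • d j) z :=
    HasDerivAt.fun_finsetProd (fun j _ => bp_fact_deriv zs hzs hz j)
  have hmon : HasDerivAt (fun w : ℂ => α * w ^ m) (α * (m * z ^ (m - 1))) z :=
    (hasDerivAt_pow m z).const_mul α
  have htot := hmon.mul hprod
  have hfun : bpB zs α m = fun w => (α * w ^ m) * ∏ j, g j w := rfl
  rw [hfun]
  have hterm : ∀ j : Fin J, (∏ i ∈ Finset.univ.erase j, g i z) • d j
      = (((1 - Complex.normSq (zs j)) / Complex.normSq (bpden zs j z) : ℝ) : ℂ)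
        * ((starRingEnd ℂ) z * ∏ i, g i z) := by
    intro j
    rw [smul_eq_mul,
      show d j = (((1 - Complex.normSq (zs j)) / Complex.normSq (bpden zs j z) : ℝ) : ℂ)
        * (starRingEnd ℂ) z * ((z - zs j) / bpden zs j z) from bp_fact_log zs hzs hz j,
      ← Finset.mul_prod_erase Finset.univ (fun i => g i z) (Finset.mem_univ j)]
    simp only [hg, bpden]
    ring
  have hzm : (starRingEnd ℂ) z * z ^ m = z ^ (m - 1) := by
    conv_lhs => rw [show m = (m - 1) + 1 from (Nat.succ_pred_eq_of_pos hm).symm]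
    rw [pow_succ, ← mul_assoc, mul_comm ((starRingEnd ℂ) z), mul_assoc, hzz, mul_one]
  have hval : α * (↑m * z ^ (m - 1)) * ∏ j, g j z
      + α * z ^ m * ∑ j, (∏ i ∈ Finset.univ.erase j, g i z) • d j
      = (bpP zs m z : ℂ) * (starRingEnd ℂ) z * bpB zs α m z := by
    rw [Finset.sum_congr rfl (fun j _ => hterm j), ← Finset.sum_mul, ← hzm]
    simp only [hg, bpB, bpP]
    push_cast
    ring
  have := htot
  rw [hval] at this
  exact this

def bpc0 {J : ℕ} (zs : Fin J → ℂ) (m : ℕ) : ℝ :=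
  m + ∑ j, (1 - Complex.normSq (zs j)) / 4

def bpL {J : ℕ} (zs : Fin J → ℂ) : ℝ :=
  ∑ j, 4 * (1 - Complex.normSq (zs j)) / (1 - ‖zs j‖) ^ 4

lemma normSq_lt_one (hzs : ∀ j, ‖zs j‖ < 1) (j : Fin J) : Complex.normSq (zs j) < 1 := by
  rw [← Complex.sq_norm]
  nlinarith [norm_nonneg (zs j), hzs j]

lemma bpden_norm_le (j : Fin J) {z : ℂ} (hz : ‖z‖ ≤ 1) (hzs : ∀ j, ‖zs j‖ < 1) :
    ‖bpden zs j z‖ ≤ 2 := by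
  rw [bpden]
  calc ‖(1:ℂ) - (starRingEnd ℂ) (zs j) * z‖ ≤ ‖(1:ℂ)‖ + ‖(starRingEnd ℂ) (zs j) * z‖ :=
        norm_sub_le _ _
    _ ≤ 1 + 1 := by
        rw [norm_one, norm_mul, RCLike.norm_conj]
        have := (hzs j).le
        have := norm_nonneg (zs j)
        nlinarith
    _ = 2 := by norm_num

lemma bpden_norm_ge (j : Fin J) {z : ℂ} (hz : ‖z‖ ≤ 1) :
    1 - ‖zs j‖ ≤ ‖bpden zs j z‖ := by
  rw [bpden]
  have h := norm_sub_norm_le (1:ℂ) ((starRingEnd ℂ) (zs j) * z)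
  rw [norm_one, norm_mul, RCLike.norm_conj] at h
  have : ‖zs j‖ * ‖z‖ ≤ ‖zs j‖ := by
    have := norm_nonneg (zs j); nlinarith
  linarith

lemma bpden_normSq_le (j : Fin J) {z : ℂ} (hz : ‖z‖ ≤ 1) (hzs : ∀ j, ‖zs j‖ < 1) :
    Complex.normSq (bpden zs j z) ≤ 4 := by
  rw [← Complex.sq_norm]
  nlinarith [bpden_norm_le zs j hz hzs, norm_nonneg (bpden zs j z)]

lemma bpden_normSq_ge (j : Fin J) {z : ℂ} (hz : ‖z‖ ≤ 1) (hzs : ∀ j, ‖zs j‖ < 1) :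
    (1 - ‖zs j‖) ^ 2 ≤ Complex.normSq (bpden zs j z) := by
  rw [← Complex.sq_norm]
  have h1 := bpden_norm_ge zs j hz
  have h2 : (0:ℝ) < 1 - ‖zs j‖ := by linarith [hzs j]
  nlinarith

lemma bpP_ge (hzs : ∀ j, ‖zs j‖ < 1) (m : ℕ) {z : ℂ} (hz : ‖z‖ ≤ 1) :
    bpc0 zs m ≤ bpP zs m z := by
  rw [bpc0, bpP]
  have : ∀ j : Fin J, (1 - Complex.normSq (zs j)) / 4
      ≤ (1 - Complex.normSq (zs j)) / Complex.normSq (bpden zs j z) := by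
    intro j
    apply div_le_div_of_nonneg_left
    · have := normSq_lt_one zs hzs j; linarith
    · have := bpden_normSq_ge zs j hz hzs
      have h2 : (0:ℝ) < 1 - ‖zs j‖ := by linarith [hzs j]
      nlinarith
    · exact bpden_normSq_le zs j hz hzs
  have := Finset.sum_le_sum (fun j (_ : j ∈ Finset.univ) => this j)
  linarith

lemma bpc0_ge_one (m : ℕ) (hm : 1 ≤ m) (hzs : ∀ j, ‖zs j‖ < 1) : 1 ≤ bpc0 zs m := by
  rw [bpc0]
  have : (0:ℝ) ≤ ∑ j, (1 - Complex.normSq (zs j)) / 4 := by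
    apply Finset.sum_nonneg
    intro j _
    have := normSq_lt_one zs hzs j
    linarith
  have hm' : (1:ℝ) ≤ m := by exact_mod_cast hm
  linarith

lemma bpc0_gt_one (m : ℕ) (hm : 1 ≤ m) (hmJ : 2 ≤ m + J) (hzs : ∀ j, ‖zs j‖ < 1) :
    1 < bpc0 zs m := by
  rcases Nat.lt_or_ge m 2 with h2 | h2
  · -- m = 1, J ≥ 1
    have hm1 : m = 1 := le_antisymm (by omega) hm
    have hJ : 1 ≤ J := by omega
    rw [bpc0, hm1]
    have hpos : (0:ℝ) < ∑ j, (1 - Complex.normSq (zs j)) / 4 := by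
      apply Finset.sum_pos
      · intro j _
        have := normSq_lt_one zs hzs j
        linarith
      · have : Nonempty (Fin J) := Fin.pos_iff_nonempty.mp (by omega)
        exact Finset.univ_nonempty
    push_cast
    linarith
  · have : (2:ℝ) ≤ m := by exact_mod_cast h2
    have := bpc0_ge_one zs m hm hzs
    have hs : (0:ℝ) ≤ ∑ j, (1 - Complex.normSq (zs j)) / 4 := by
      apply Finset.sum_nonneg
      intro j _
      have := normSq_lt_one zs hzs j
      linarith
    rw [bpc0]
    linarith

lemma bpL_nonneg (hzs : ∀ j, ‖zs j‖ < 1) : 0 ≤ bpL zs := by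
  rw [bpL]
  apply Finset.sum_nonneg
  intro j _
  have h1 := normSq_lt_one zs hzs j
  have h2 : (0:ℝ) < 1 - ‖zs j‖ := by linarith [hzs j]
  have h3 : (0:ℝ) < (1 - ‖zs j‖) ^ 4 := by positivity
  have h4 : (0:ℝ) ≤ 4 * (1 - Complex.normSq (zs j)) := by linarith
  positivity

lemma bpP_lip (hzs : ∀ j, ‖zs j‖ < 1) (m : ℕ) {x y : ℂ} (hx : ‖x‖ = 1) (hy : ‖y‖ = 1) :
    |bpP zs m x - bpP zs m y| ≤ bpL zs * ‖x - y‖ := by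
  have hdiff : bpP zs m x - bpP zs m y
      = ∑ j, ((1 - Complex.normSq (zs j)) / Complex.normSq (bpden zs j x)
        - (1 - Complex.normSq (zs j)) / Complex.normSq (bpden zs j y)) := by
    rw [bpP, bpP, Finset.sum_sub_distrib]
    ring
  rw [hdiff]
  calc |∑ j, ((1 - Complex.normSq (zs j)) / Complex.normSq (bpden zs j x)
        - (1 - Complex.normSq (zs j)) / Complex.normSq (bpden zs j y))|
      ≤ ∑ j, |(1 - Complex.normSq (zs j)) / Complex.normSq (bpden zs j x)
        - (1 - Complex.normSq (zs j)) / Complex.normSq (bpden zs j y)| :=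
        Finset.abs_sum_le_sum_abs _ _
    _ ≤ ∑ j, 4 * (1 - Complex.normSq (zs j)) / (1 - ‖zs j‖) ^ 4 * ‖x - y‖ := by
        apply Finset.sum_le_sum
        intro j _
        set a := 1 - Complex.normSq (zs j) with ha
        set nx := Complex.normSq (bpden zs j x) with hnx
        set ny := Complex.normSq (bpden zs j y) with hny
        set δ := 1 - ‖zs j‖ with hδ
        have hδpos : (0:ℝ) < δ := by rw [hδ]; linarith [hzs j]
        have hapos : (0:ℝ) < a := by rw [ha]; linarith [normSq_lt_one zs hzs j]
        have hnxge : δ ^ 2 ≤ nx := bpden_normSq_ge zs j hx.le hzs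
        have hnyge : δ ^ 2 ≤ ny := bpden_normSq_ge zs j hy.le hzs
        have hnxpos : 0 < nx := lt_of_lt_of_le (by positivity) hnxge
        have hnypos : 0 < ny := lt_of_lt_of_le (by positivity) hnyge
        -- |nx - ny| ≤ 4 ‖x - y‖
        have hsub : bpden zs j x - bpden zs j y = (starRingEnd ℂ) (zs j) * (y - x) := by
          rw [bpden, bpden]; ring
        have hDd : ‖bpden zs j x - bpden zs j y‖ ≤ ‖x - y‖ := by
          rw [hsub, norm_mul, RCLike.norm_conj, norm_sub_rev]
          have := norm_nonneg (y - x)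
          nlinarith [hzs j, norm_nonneg (x - y), norm_sub_rev x y]
        have hnd : |nx - ny| ≤ 4 * ‖x - y‖ := by
          rw [hnx, hny, ← Complex.sq_norm, ← Complex.sq_norm]
          have h1 := abs_norm_sub_norm_le (bpden zs j x) (bpden zs j y)
          have h2 := bpden_norm_le zs j hx.le hzs
          have h3 := bpden_norm_le zs j hy.le hzs
          have h4 := norm_nonneg (bpden zs j x)
          have h5 := norm_nonneg (bpden zs j y)
          have h6 : |‖bpden zs j x‖ ^ 2 - ‖bpden zs j y‖ ^ 2|
              = |‖bpden zs j x‖ + ‖bpden zs j y‖| * |‖bpden zs j x‖ - ‖bpden zs j y‖| := by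
            rw [← abs_mul]; ring_nf
          rw [h6]
          have h7 : |‖bpden zs j x‖ + ‖bpden zs j y‖| ≤ 4 := by
            rw [abs_of_nonneg (by linarith)]; linarith
          have h8 : |‖bpden zs j x‖ - ‖bpden zs j y‖| ≤ ‖x - y‖ := le_trans h1 hDd
          have h9 : (0:ℝ) ≤ |‖bpden zs j x‖ - ‖bpden zs j y‖| := abs_nonneg _
          nlinarith
        have heq : a / nx - a / ny = a * (ny - nx) / (nx * ny) := by
          field_simp
        rw [heq, abs_div, abs_mul, abs_of_pos hapos, abs_of_pos (mul_pos hnxpos hnypos)]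
        have hnum : a * |ny - nx| ≤ a * (4 * ‖x - y‖) := by
          apply mul_le_mul_of_nonneg_left _ hapos.le
          rw [abs_sub_comm]; exact hnd
        have hden4 : δ ^ 4 ≤ nx * ny := by nlinarith
        have hδ4 : (0:ℝ) < δ ^ 4 := by positivity
        calc a * |ny - nx| / (nx * ny) ≤ a * (4 * ‖x - y‖) / δ ^ 4 := by
              apply div_le_div₀ (by positivity) hnum hδ4 hden4
          _ = 4 * a / δ ^ 4 * ‖x - y‖ := by ring
    _ = bpL zs * ‖x - y‖ := by rw [bpL, Finset.sum_mul]

end BP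


section Lift
variable {J : ℕ} (zs : Fin J → ℂ) (α : ℂ) (m : ℕ)

def bpψ (t : ℝ) : ℝ := bpP zs m (pc t)

def bpF (t : ℝ) : ℝ :=
  Complex.arg (bpB zs α m 1) / (2 * Real.pi) + ∫ s in (0:ℝ)..t, bpψ zs m s

lemma bpψ_continuous (hzs : ∀ j, ‖zs j‖ < 1) : Continuous (bpψ zs m) := by
  unfold bpψ bpP
  apply continuous_const.add
  apply continuous_finset_sum
  intro j _
  apply Continuous.div continuous_const
  · exact Complex.continuous_normSq.comp
      ((continuous_const.sub (continuous_const.mul pc_continuous)))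
  · intro t
    have h := bpden_normSq_ge zs j (le_of_eq (pc_norm t)) hzs
    have h2 : (0:ℝ) < 1 - ‖zs j‖ := by linarith [hzs j]
    have : (0:ℝ) < Complex.normSq (bpden zs j (pc t)) := by nlinarith
    exact ne_of_gt this

lemma bpF_hasDerivAt (hzs : ∀ j, ‖zs j‖ < 1) (t : ℝ) :
    HasDerivAt (bpF zs α m) (bpψ zs m t) t := by
  unfold bpF
  exact (((bpψ_continuous zs m hzs).integral_hasStrictDerivAt 0 t).hasDerivAt).const_add _

lemma bpψ_ge (hzs : ∀ j, ‖zs j‖ < 1) (t : ℝ) : bpc0 zs m ≤ bpψ zs m t :=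
  bpP_ge zs hzs m (le_of_eq (pc_norm t))

lemma bpB_one_mem (hzs : ∀ j, ‖zs j‖ < 1) (hα : ‖α‖ = 1) : ‖bpB zs α m 1‖ = 1 :=
  bpB_norm zs hzs α hα m (by norm_num)

lemma bpF_conj (hzs : ∀ j, ‖zs j‖ < 1) (hα : ‖α‖ = 1) (hm : 1 ≤ m) (t : ℝ) :
    bpB zs α m (pc t) = pc (bpF zs α m t) := by
  classical
  set h : ℝ → ℂ := fun t => bpB zs α m (pc t)
    * Complex.exp (-(2 * Real.pi * Complex.I) * ((bpF zs α m t : ℝ) : ℂ)) with hh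
  have hder : ∀ s : ℝ, HasDerivAt h 0 s := by
    intro s
    have h1 : HasDerivAt (fun u : ℝ => bpB zs α m (pc u))
        ((2 * Real.pi * Complex.I * pc s) •
          ((bpP zs m (pc s) : ℂ) * (starRingEnd ℂ) (pc s) * bpB zs α m (pc s))) s :=
      HasDerivAt.scomp s (bpB_hasDerivAt zs hzs α m hm (pc_norm s)) (pc_hasDerivAt s)
    have h2 : HasDerivAt (fun u : ℝ => ((bpF zs α m u : ℝ) : ℂ)) ((bpψ zs m s : ℝ) : ℂ) s :=
      (bpF_hasDerivAt zs α m hzs s).ofReal_comp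
    have h3 : HasDerivAt (fun u : ℝ => -(2 * Real.pi * Complex.I) * ((bpF zs α m u : ℝ) : ℂ))
        (-(2 * Real.pi * Complex.I) * ((bpψ zs m s : ℝ) : ℂ)) s := h2.const_mul _
    have h4 : HasDerivAt (fun u : ℝ =>
        Complex.exp (-(2 * Real.pi * Complex.I) * ((bpF zs α m u : ℝ) : ℂ)))
        ((-(2 * Real.pi * Complex.I) * ((bpψ zs m s : ℝ) : ℂ)) •
          Complex.exp (-(2 * Real.pi * Complex.I) * ((bpF zs α m s : ℝ) : ℂ))) s :=
      HasDerivAt.scomp s (Complex.hasDerivAt_exp _) h3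
    have h5 := h1.mul h4
    have hzz : pc s * (starRingEnd ℂ) (pc s) = 1 := by
      rw [mul_comm]; exact conj_mul_self (pc_norm s)
    have hψ : ((bpψ zs m s : ℝ) : ℂ) = ((bpP zs m (pc s) : ℝ) : ℂ) := rfl
    refine h5.congr_deriv ?_
    symm
    simp only [smul_eq_mul, hψ]
    set E := Complex.exp (-(2 * Real.pi * Complex.I) * ((bpF zs α m s : ℝ) : ℂ))
    set B := bpB zs α m (pc s)
    set Pv := ((bpP zs m (pc s) : ℝ) : ℂ)
    linear_combination (-(2 * Real.pi * Complex.I) * Pv * B * E) * hzz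
  have hconst : ∀ s : ℝ, h s = h 0 := by
    intro s
    exact is_const_of_deriv_eq_zero (fun u => (hder u).differentiableAt)
      (fun u => (hder u).deriv) s 0
  have hB1 : bpB zs α m (pc 0) = bpB zs α m 1 := by
    norm_num [pc]
  have hF0 : bpF zs α m 0 = Complex.arg (bpB zs α m 1) / (2 * Real.pi) := by
    unfold bpF
    rw [intervalIntegral.integral_same, add_zero]
  have hpcγ : pc (bpF zs α m 0) = bpB zs α m 1 := by
    rw [hF0]
    exact pc_arg _ (bpB_one_mem zs α m hzs hα)
  have hBne : bpB zs α m 1 ≠ 0 := by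
    intro hcon
    have := bpB_one_mem zs α m hzs hα
    rw [hcon] at this; simp at this
  have hexp : ∀ u : ℝ, Complex.exp (-(2 * Real.pi * Complex.I) * ((bpF zs α m u : ℝ) : ℂ))
      = (pc (bpF zs α m u))⁻¹ := by
    intro u
    rw [pc, ← Complex.exp_neg]
    ring_nf
  have h0 : h 0 = 1 := by
    rw [hh]
    simp only
    rw [hB1, hexp, hpcγ, mul_inv_cancel₀ hBne]
  have ht := hconst t
  rw [h0, hh] at ht
  simp only at ht
  rw [hexp] at ht
  have hpcne : pc (bpF zs α m t) ≠ 0 := by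
    intro hcon
    have := pc_norm (bpF zs α m t)
    rw [hcon] at this; simp at this
  field_simp at ht
  exact ht

end Lift

section Iter
variable {J : ℕ} (zs : Fin J → ℂ) (α : ℂ) (m : ℕ)

lemma bpF_sub (hzs : ∀ j, ‖zs j‖ < 1) {a b : ℝ} (hab : a ≤ b) :
    bpc0 zs m * (b - a) ≤ bpF zs α m b - bpF zs α m a := by
  have hcont := bpψ_continuous zs m hzs
  have hint : bpF zs α m b - bpF zs α m a = ∫ s in a..b, bpψ zs m s := by
    unfold bpF
    rw [add_sub_add_left_eq_sub]
    exact intervalIntegral.integral_interval_sub_left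
      (hcont.intervalIntegrable 0 b) (hcont.intervalIntegrable 0 a)
  rw [hint]
  have h1 : bpc0 zs m * (b - a) = ∫ _ in a..b, bpc0 zs m := by
    rw [intervalIntegral.integral_const, smul_eq_mul]; ring
  rw [h1]
  exact intervalIntegral.integral_mono_on hab (intervalIntegrable_const)
    (hcont.intervalIntegrable a b) (fun x _ => bpψ_ge zs m hzs x)

lemma bpF_mono (hzs : ∀ j, ‖zs j‖ < 1) (hm : 1 ≤ m) : Monotone (bpF zs α m) := by
  intro a b hab
  have h1 := bpF_sub zs α m hzs hab
  have h2 := bpc0_ge_one zs m hm hzs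
  nlinarith

lemma bpF_iter_conj (hzs : ∀ j, ‖zs j‖ < 1) (hα : ‖α‖ = 1) (hm : 1 ≤ m) (n : ℕ) (t : ℝ) :
    (bpB zs α m)^[n] (pc t) = pc ((bpF zs α m)^[n] t) := by
  induction n with
  | zero => simp
  | succ n ih =>
    rw [Function.iterate_succ_apply', Function.iterate_succ_apply', ih,
      bpF_conj zs α m hzs hα hm]

lemma bpF_iter_sub (hzs : ∀ j, ‖zs j‖ < 1) (hm : 1 ≤ m) (n : ℕ) {a b : ℝ} (hab : a ≤ b) :
    bpc0 zs m ^ n * (b - a) ≤ (bpF zs α m)^[n] b - (bpF zs α m)^[n] a := by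
  induction n with
  | zero => simp
  | succ n ih =>
    rw [Function.iterate_succ_apply', Function.iterate_succ_apply']
    have hmono : (bpF zs α m)^[n] a ≤ (bpF zs α m)^[n] b :=
      ((bpF_mono zs α m hzs hm).iterate n) hab
    have h1 := bpF_sub zs α m hzs hmono
    have hc0 := bpc0_ge_one zs m hm hzs
    have hpow : (0:ℝ) ≤ bpc0 zs m ^ n := by positivity
    calc bpc0 zs m ^ (n+1) * (b - a) = bpc0 zs m * (bpc0 zs m ^ n * (b - a)) := by ring
      _ ≤ bpc0 zs m * ((bpF zs α m)^[n] b - (bpF zs α m)^[n] a) := by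
          apply mul_le_mul_of_nonneg_left ih (by linarith)
      _ ≤ _ := h1

lemma bpB_iter_norm (hzs : ∀ j, ‖zs j‖ < 1) (hα : ‖α‖ = 1) (n : ℕ) {z : ℂ} (hz : ‖z‖ = 1) :
    ‖(bpB zs α m)^[n] z‖ = 1 := by
  induction n with
  | zero => simpa
  | succ n ih => rw [Function.iterate_succ_apply']; exact bpB_norm zs hzs α hα m ih

lemma bpB_iter_hasDerivAt (hzs : ∀ j, ‖zs j‖ < 1) (hα : ‖α‖ = 1) (hm : 1 ≤ m) (n : ℕ)
    {z : ℂ} (hz : ‖z‖ = 1) :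
    HasDerivAt ((bpB zs α m)^[n])
      (∏ k ∈ Finset.range n,
        ((bpP zs m ((bpB zs α m)^[k] z) : ℂ) * (starRingEnd ℂ) ((bpB zs α m)^[k] z)
          * bpB zs α m ((bpB zs α m)^[k] z))) z := by
  induction n with
  | zero => simpa using hasDerivAt_id z
  | succ n ih =>
    rw [Function.iterate_succ']
    have hB := bpB_hasDerivAt zs hzs α m hm (bpB_iter_norm zs α m hzs hα n hz)
    have := hB.comp z ih
    rw [Finset.prod_range_succ]
    exact this.congr_deriv (by ring)

lemma bpP_pos (hzs : ∀ j, ‖zs j‖ < 1) (hm : 1 ≤ m) {z : ℂ} (hz : ‖z‖ ≤ 1) :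
    0 < bpP zs m z :=
  lt_of_lt_of_le (by linarith [bpc0_ge_one zs m hm hzs]) (bpP_ge zs hzs m hz)

lemma bpB_iter_deriv_norm (hzs : ∀ j, ‖zs j‖ < 1) (hα : ‖α‖ = 1) (hm : 1 ≤ m) (n : ℕ)
    {z : ℂ} (hz : ‖z‖ = 1) :
    ‖deriv ((bpB zs α m)^[n]) z‖ = ∏ k ∈ Finset.range n, bpP zs m ((bpB zs α m)^[k] z) := by
  rw [(bpB_iter_hasDerivAt zs α m hzs hα hm n hz).deriv, norm_prod]
  apply Finset.prod_congr rfl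
  intro k _
  have hk : ‖(bpB zs α m)^[k] z‖ = 1 := bpB_iter_norm zs α m hzs hα k hz
  rw [norm_mul, norm_mul, RCLike.norm_conj, hk, bpB_norm zs hzs α hα m hk,
    Complex.norm_real, Real.norm_eq_abs,
    abs_of_pos (bpP_pos zs m hzs hm hk.le)]
  ring

end Iter

lemma pc_lip (s t : ℝ) : ‖pc s - pc t‖ ≤ 2 * Real.pi * |s - t| := by
  have hlip : LipschitzWith (Real.toNNReal (2 * Real.pi)) pc := by
    apply lipschitzWith_of_nnnorm_deriv_le (fun u => (pc_hasDerivAt u).differentiableAt)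
    intro u
    rw [(pc_hasDerivAt u).deriv, ← NNReal.coe_le_coe, coe_nnnorm,
      Real.coe_toNNReal _ (by positivity)]
    rw [norm_mul, pc_norm, mul_one]
    have : ‖(2 * (Real.pi:ℂ) * Complex.I)‖ = 2 * Real.pi := by
      simp [norm_mul, Complex.norm_I]
      exact Real.pi_pos.le
    rw [this]
  have := hlip.dist_le_mul s t
  rw [dist_eq_norm, Real.dist_eq, Real.coe_toNNReal _ (by positivity)] at this
  exact this

section Img
variable {J : ℕ} (zs : Fin J → ℂ) (α : ℂ) (m : ℕ)

lemma pc_image_full {u v : ℝ} (huv : u + 1 ≤ v) : pc '' Set.Icc u v = uc := by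
  apply Set.eq_of_subset_of_subset (pc_image_Icc_subset u v)
  exact (uc_subset_pc_image u).trans (Set.image_mono (Set.Icc_subset_Icc_right huv))

lemma bpF_iter_continuous (hzs : ∀ j, ‖zs j‖ < 1) (N : ℕ) :
    Continuous ((bpF zs α m)^[N]) := by
  have : Continuous (bpF zs α m) :=
    Differentiable.continuous (fun t => (bpF_hasDerivAt zs α m hzs t).differentiableAt)
  exact this.iterate N

lemma bpF_iter_image (hzs : ∀ j, ‖zs j‖ < 1) (hm : 1 ≤ m) (N : ℕ) {a b : ℝ} (hab : a ≤ b) :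
    (bpF zs α m)^[N] '' Set.Icc a b
      = Set.Icc ((bpF zs α m)^[N] a) ((bpF zs α m)^[N] b) := by
  have hmono := (bpF_mono zs α m hzs hm).iterate N
  apply Set.eq_of_subset_of_subset
  · rintro - ⟨t, ht, rfl⟩
    exact ⟨hmono ht.1, hmono ht.2⟩
  · exact intermediate_value_Icc hab ((bpF_iter_continuous zs α m hzs N).continuousOn)

lemma bpB_iter_image (hzs : ∀ j, ‖zs j‖ < 1) (hα : ‖α‖ = 1) (hm : 1 ≤ m) (N : ℕ)
    {a b : ℝ} (hab : a ≤ b) :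
    (bpB zs α m)^[N] '' (pc '' Set.Icc a b)
      = pc '' Set.Icc ((bpF zs α m)^[N] a) ((bpF zs α m)^[N] b) := by
  rw [← Set.image_comp]
  have h1 : ((bpB zs α m)^[N] ∘ pc) '' Set.Icc a b
      = (pc ∘ (bpF zs α m)^[N]) '' Set.Icc a b := by
    apply Set.image_congr
    intro t _
    exact bpF_iter_conj zs α m hzs hα hm N t
  rw [h1, Set.image_comp, bpF_iter_image zs α m hzs hm N hab]

end Img

/-- locally constant derivative of iterates. -/
theorem quasi_constant_derivative (f : ℂ → ℂ) (hf : IsFBPN f) (hf0 : f 0 = 0) :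
    ∃ C : ℝ, 1 < C ∧
      ∀ N : ℕ, 1 ≤ N → ∀ ξ₀ ∈ uc, ∀ ℓ : ℝ, 0 ≤ ℓ →
        mA (f^[N] '' carc ξ₀ ℓ) < 1 →
        ∀ ξ ∈ carc ξ₀ ℓ, ∀ ξstar ∈ carc ξ₀ ℓ,
          ‖deriv (f^[N]) ξ‖ ≤ C * ‖deriv (f^[N]) ξstar‖ := by
  obtain ⟨α, m, J, zs, hα, hm, hmJ, hzs, hfw⟩ := hf
  have hfB : f = bpB zs α m := funext fun w => hfw w
  subst hfB
  set c0 := bpc0 zs m with hc0def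
  have hc0 : 1 < c0 := bpc0_gt_one zs m hm hmJ hzs
  have hc0pos : (0:ℝ) < c0 := by linarith
  set L := bpL zs with hLdef
  have hL : 0 ≤ L := bpL_nonneg zs hzs
  set K := L * (2 * Real.pi) / c0 * (1 / (c0 - 1)) with hKdef
  have hK : 0 ≤ K := by
    apply mul_nonneg (div_nonneg (mul_nonneg hL (by positivity)) hc0pos.le)
    have : (0:ℝ) < c0 - 1 := by linarith
    positivity
  refine ⟨Real.exp K + 1, by linarith [Real.exp_pos K], ?_⟩
  intro N hN ξ₀ hξ₀ ℓ hℓ hsmall ξ hξ ξstar hξstar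
  by_cases hℓ1 : 1 ≤ ℓ
  · exfalso
    have hcarc : carc ξ₀ ℓ = uc := by rw [carc, if_pos hℓ1]
    rw [hcarc] at hsmall
    have himg : (bpB zs α m)^[N] '' uc = uc := by
      conv_lhs => rw [uc_eq_pc_image 0]
      rw [bpB_iter_image zs α m hzs hα hm N (by norm_num : (0:ℝ) ≤ 0 + 1)]
      apply pc_image_full
      have h1 := bpF_iter_sub zs α m hzs hm N (by norm_num : (0:ℝ) ≤ 0 + 1)
      have h2 : (1:ℝ) ≤ c0 ^ N := by
        simpa using pow_le_pow_left₀ (by norm_num) hc0.le N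
      have h3 : c0 ^ N * (0 + 1 - 0) = c0 ^ N := by ring
      rw [h3] at h1
      linarith
    rw [himg, mA_uc] at hsmall
    exact lt_irrefl 1 hsmall
  · push_neg at hℓ1
    set a := Complex.arg ξ₀ / (2 * Real.pi) - ℓ / 2 with hadef
    set b := Complex.arg ξ₀ / (2 * Real.pi) + ℓ / 2 with hbdef
    have hab : a ≤ b := by rw [hadef, hbdef]; linarith
    have hcarc : carc ξ₀ ℓ = pc '' Set.Icc a b := by rw [carc, if_neg (not_le.mpr hℓ1)]
    rw [hcarc] at hsmall hξ hξstar
    obtain ⟨s, hs, rfl⟩ := hξ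
    obtain ⟨s', hs', rfl⟩ := hξstar
    set F := bpF zs α m with hFdef
    have hFmono : Monotone F := bpF_mono zs α m hzs hm
    have hwidth : ∀ k, k ≤ N →
        c0 ^ (N - k) * (F^[k] b - F^[k] a) ≤ F^[N] b - F^[N] a := by
      intro k hk
      have hmonk := (hFmono.iterate k) hab
      have h1 := bpF_iter_sub zs α m hzs hm (N - k) hmonk
      rw [← Function.iterate_add_apply, ← Function.iterate_add_apply,
        Nat.sub_add_cancel hk] at h1
      exact h1
    have hBA : F^[N] b - F^[N] a < 1 := by
      by_contra hge
      push_neg at hge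
      have himg : (bpB zs α m)^[N] '' (pc '' Set.Icc a b) = uc := by
        rw [bpB_iter_image zs α m hzs hα hm N hab]
        exact pc_image_full (by linarith)
      rw [himg, mA_uc] at hsmall
      exact lt_irrefl 1 hsmall
    have hwk : ∀ k, k < N → F^[k] b - F^[k] a ≤ c0 ^ k / c0 ^ N := by
      intro k hk
      have h1 := hwidth k hk.le
      have hpos : (0:ℝ) < c0 ^ (N - k) := by positivity
      have h2 : c0 ^ (N - k) * (F^[k] b - F^[k] a) < 1 := lt_of_le_of_lt h1 hBA
      have h3 : c0 ^ (N - k) * c0 ^ k = c0 ^ N := by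
        rw [← pow_add, Nat.sub_add_cancel hk.le]
      have h5 : 1 / c0 ^ (N - k) = c0 ^ k / c0 ^ N := by
        rw [← h3]
        have : (0:ℝ) < c0 ^ k := by positivity
        field_simp
      have h4 : F^[k] b - F^[k] a ≤ 1 / c0 ^ (N - k) := by
        rw [le_div_iff₀ hpos]; nlinarith
      linarith [h5 ▸ h4]
    have hnorm1 := bpB_iter_deriv_norm zs α m hzs hα hm N (pc_norm s)
    have hnorm2 := bpB_iter_deriv_norm zs α m hzs hα hm N (pc_norm s')
    rw [hnorm1, hnorm2]
    set u : ℕ → ℝ := fun k => L * (2 * Real.pi) / c0 * (c0 ^ k / c0 ^ N) with hudef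
    have hu0 : ∀ k, 0 ≤ u k := by
      intro k
      apply mul_nonneg (div_nonneg (mul_nonneg hL (by positivity)) hc0pos.le)
      positivity
    have hmain : ∀ k, k < N →
        bpP zs m ((bpB zs α m)^[k] (pc s))
          ≤ bpP zs m ((bpB zs α m)^[k] (pc s')) * (1 + u k) := by
      intro k hk
      have hk1 : ‖(bpB zs α m)^[k] (pc s)‖ = 1 := bpB_iter_norm zs α m hzs hα k (pc_norm s)
      have hk2 : ‖(bpB zs α m)^[k] (pc s')‖ = 1 := bpB_iter_norm zs α m hzs hα k (pc_norm s')
      have hlipk := bpP_lip zs hzs m hk1 hk2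
      have hdk : ‖(bpB zs α m)^[k] (pc s) - (bpB zs α m)^[k] (pc s')‖
          ≤ 2 * Real.pi * (F^[k] b - F^[k] a) := by
        rw [bpF_iter_conj zs α m hzs hα hm k s, bpF_iter_conj zs α m hzs hα hm k s']
        refine le_trans (pc_lip _ _) ?_
        apply mul_le_mul_of_nonneg_left _ (by positivity)
        have h1 : F^[k] a ≤ F^[k] s := (hFmono.iterate k) hs.1
        have h2 : F^[k] s ≤ F^[k] b := (hFmono.iterate k) hs.2
        have h3 : F^[k] a ≤ F^[k] s' := (hFmono.iterate k) hs'.1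
        have h4 : F^[k] s' ≤ F^[k] b := (hFmono.iterate k) hs'.2
        rw [abs_le]
        constructor <;> linarith
      have hPyc0 : c0 ≤ bpP zs m ((bpB zs α m)^[k] (pc s')) := bpP_ge zs hzs m hk2.le
      have hstep : bpP zs m ((bpB zs α m)^[k] (pc s))
          ≤ bpP zs m ((bpB zs α m)^[k] (pc s'))
            + L * (2 * Real.pi * (F^[k] b - F^[k] a)) := by
        have h6 : bpP zs m ((bpB zs α m)^[k] (pc s)) - bpP zs m ((bpB zs α m)^[k] (pc s'))
            ≤ L * ‖(bpB zs α m)^[k] (pc s) - (bpB zs α m)^[k] (pc s')‖ :=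
          le_trans (le_abs_self _) hlipk
        have h7 : L * ‖(bpB zs α m)^[k] (pc s) - (bpB zs α m)^[k] (pc s')‖
            ≤ L * (2 * Real.pi * (F^[k] b - F^[k] a)) :=
          mul_le_mul_of_nonneg_left hdk hL
        linarith
      have h8 : L * (2 * Real.pi * (F^[k] b - F^[k] a)) ≤ c0 * u k := by
        have h7 := hwk k hk
        have h9 : L * (2 * Real.pi * (F^[k] b - F^[k] a))
            ≤ L * (2 * Real.pi * (c0 ^ k / c0 ^ N)) := by
          apply mul_le_mul_of_nonneg_left _ hL
          apply mul_le_mul_of_nonneg_left h7 (by positivity)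
        have heq : c0 * u k = L * (2 * Real.pi * (c0 ^ k / c0 ^ N)) := by
          rw [hudef]
          field_simp
        linarith
      have h10 : c0 * u k ≤ bpP zs m ((bpB zs α m)^[k] (pc s')) * u k :=
        mul_le_mul_of_nonneg_right hPyc0 (hu0 k)
      nlinarith
    have hPpos : ∀ (t : ℝ) (k : ℕ), 0 < bpP zs m ((bpB zs α m)^[k] (pc t)) := by
      intro t k
      exact bpP_pos zs m hzs hm (bpB_iter_norm zs α m hzs hα k (pc_norm t)).le
    have hsum : ∑ k ∈ Finset.range N, u k ≤ K := by
      have hgeom : ∑ k ∈ Finset.range N, c0 ^ k = (c0 ^ N - 1) / (c0 - 1) :=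
        geom_sum_eq (by linarith) N
      have h1 : ∑ k ∈ Finset.range N, u k
          = L * (2 * Real.pi) / c0 * (((c0 ^ N - 1) / (c0 - 1)) / c0 ^ N) := by
        rw [hudef, ← Finset.mul_sum, ← Finset.sum_div, hgeom]
      rw [h1, hKdef]
      apply mul_le_mul_of_nonneg_left _ (div_nonneg (mul_nonneg hL (by positivity)) hc0pos.le)
      have hc1 : (0:ℝ) < c0 - 1 := by linarith
      have hcNpos : (0:ℝ) < c0 ^ N := by positivity
      rw [div_div, div_le_div_iff₀ (mul_pos hc1 hcNpos) hc1]
      have hcN : (1:ℝ) ≤ c0 ^ N := by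
        simpa using pow_le_pow_left₀ (by norm_num) hc0.le N
      nlinarith
    calc ∏ k ∈ Finset.range N, bpP zs m ((bpB zs α m)^[k] (pc s))
        ≤ ∏ k ∈ Finset.range N, (bpP zs m ((bpB zs α m)^[k] (pc s')) * (1 + u k)) := by
          apply Finset.prod_le_prod (fun k _ => (hPpos s k).le)
          intro k hk
          exact hmain k (Finset.mem_range.mp hk)
      _ = (∏ k ∈ Finset.range N, (1 + u k))
            * ∏ k ∈ Finset.range N, bpP zs m ((bpB zs α m)^[k] (pc s')) := by
          rw [Finset.prod_mul_distrib]; ring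
      _ ≤ Real.exp K * ∏ k ∈ Finset.range N, bpP zs m ((bpB zs α m)^[k] (pc s')) := by
          apply mul_le_mul_of_nonneg_right _
            (Finset.prod_nonneg (fun k _ => (hPpos s' k).le))
          calc ∏ k ∈ Finset.range N, (1 + u k)
              ≤ ∏ k ∈ Finset.range N, Real.exp (u k) := by
                apply Finset.prod_le_prod (fun k _ => by linarith [hu0 k])
                intro k _
                linarith [Real.add_one_le_exp (u k)]
            _ = Real.exp (∑ k ∈ Finset.range N, u k) := (Real.exp_sum _ _).symm
            _ ≤ Real.exp K := Real.exp_le_exp.mpr hsum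
      _ ≤ (Real.exp K + 1) * ∏ k ∈ Finset.range N, bpP zs m ((bpB zs α m)^[k] (pc s')) := by
          apply mul_le_mul_of_nonneg_right _
            (Finset.prod_nonneg (fun k _ => (hPpos s' k).le))
          linarith

end
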